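/- arXiv:1202.1928 — 6 statements merged into one kernel-verified Lean document; each statement's English description precedes it below -/
import Mathlib

section
/- Assume each L_k > 0, let G : X → ℝ be d_L-short, let O ⊆ X, and let k ∈ {1,…,K}. Then D̂_k[X, G|_O, d_L] = sup{ D_k[g] : g ∈ E(X, G|_O, d_L) }, where both suprema are taken in the extended real numbers [0, ∞]. -/
/-!
The inequality `≥` is immediate: the values of an extension `g` at two points `x, x'` that
differ only in coordinate `k` form an admissible pair `(x, g x), (x', g x')`. For `≤`, an
admissible pair together with the graph of `G` on `O` is a `d_L`-short partial function, and
McShane's inf-convolution `w ↦ inf_p (p.2 + d_L(w, p.1))` extends it to a `d_L`-short function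
on all of `X` taking the values `y` at `x` and `y'` at `x'`.
-/

open Finset

section McShane

variable {α : Type*} {d : α → α → ℝ}

theorem exists_short_extension_of_pairwise (d_self : ∀ a, d a a = 0)
    (d_comm : ∀ a b, d a b = d b a) (d_triangle : ∀ a b c, d a c ≤ d a b + d b c)
    {S : Set (α × ℝ)} (hS : S.Nonempty)
    (hS_short : S.Pairwise fun p q => |p.2 - q.2| ≤ d p.1 q.1) :
    ∃ g : α → ℝ, (∀ w w', |g w - g w'| ≤ d w w') ∧ ∀ p ∈ S, g p.1 = p.2 := by
  have hS_le : ∀ p ∈ S, ∀ q ∈ S, p.2 - q.2 ≤ d p.1 q.1 := by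
    intro p hp q hq
    rcases eq_or_ne p q with rfl | hpq
    · simp [d_self]
    · exact (le_abs_self _).trans (hS_short hp hq hpq)
  obtain ⟨p₀, hp₀⟩ := hS
  have : Nonempty S := ⟨⟨p₀, hp₀⟩⟩
  have hbdd (w : α) : BddBelow (Set.range fun p : S => p.1.2 + d w p.1.1) := by
    refine ⟨p₀.2 - d p₀.1 w, ?_⟩
    rintro _ ⟨p, rfl⟩
    linarith [hS_le p₀ hp₀ p p.2, d_triangle p₀.1 w p.1.1]
  set g : α → ℝ := fun w => ⨅ p : S, p.1.2 + d w p.1.1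
  have g_sub_le (w w' : α) : g w - g w' ≤ d w w' := by
    suffices g w - d w w' ≤ g w' by linarith
    refine le_ciInf fun p => ?_
    linarith [ciInf_le (hbdd w) p, d_triangle w w' p.1.1]
  refine ⟨g, fun w w' => abs_sub_le_iff.2 ⟨g_sub_le w w', d_comm w w' ▸ g_sub_le w' w⟩,
    fun p hp => le_antisymm ?_ (le_ciInf fun q => ?_)⟩
  · simpa [d_self] using ciInf_le (hbdd p.1) ⟨p, hp⟩
  · linarith [hS_le p hp q q.2]

theorem pairwise_short_insert_insert_graph (d_comm : ∀ a b, d a b = d b a) {f : α → ℝ}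
    {s : Set α} (hf : ∀ z ∈ s, ∀ z' ∈ s, |f z - f z'| ≤ d z z') {x x' : α} {y y' : ℝ}
    (hxx' : |y - y'| ≤ d x x') (hx : ∀ z ∈ s, |y - f z| ≤ d x z)
    (hx' : ∀ z ∈ s, |y' - f z| ≤ d x' z) :
    (insert (x, y) (insert (x', y') ((fun z => (z, f z)) '' s))).Pairwise
      fun p q => |p.2 - q.2| ≤ d p.1 q.1 := by
  have symm {a b : α} {u v : ℝ} (h : |u - v| ≤ d a b) : |v - u| ≤ d b a := by
    rwa [abs_sub_comm, d_comm]
  simp only [Set.pairwise_insert, Set.mem_insert_iff, Set.forall_mem_image, forall_eq_or_imp]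
  refine ⟨⟨?_, fun z hz _ => ⟨hx' z hz, symm (hx' z hz)⟩⟩,
    fun _ => ⟨hxx', symm hxx'⟩, fun z hz _ => ⟨hx z hz, symm (hx z hz)⟩⟩
  rintro _ ⟨z, hz, rfl⟩ _ ⟨z', hz', rfl⟩ -
  exact hf z hz z' hz'

end McShane

section WeightedDist

variable {K : ℕ} {X : Fin K → Type*} [∀ k, MetricSpace (X k)] (L : Fin K → ℝ)

theorem weighted_dist_self (x : ∀ j, X j) : ∑ j, L j * dist (x j) (x j) = 0 := by
  simp

theorem weighted_dist_comm (x x' : ∀ j, X j) :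
    ∑ j, L j * dist (x j) (x' j) = ∑ j, L j * dist (x' j) (x j) := by
  simp only [dist_comm]

theorem weighted_dist_triangle (hL : ∀ k, 0 ≤ L k) (x x' x'' : ∀ j, X j) :
    ∑ j, L j * dist (x j) (x'' j) ≤
      ∑ j, L j * dist (x j) (x' j) + ∑ j, L j * dist (x' j) (x'' j) := by
  rw [← sum_add_distrib]
  gcongr with j
  rw [← mul_add]
  exact mul_le_mul_of_nonneg_left (dist_triangle _ _ _) (hL j)

theorem weighted_dist_eq_of_eq_off {k : Fin K} {x x' : ∀ j, X j}
    (h : ∀ j, j ≠ k → x j = x' j) :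
    ∑ j, L j * dist (x j) (x' j) = L k * dist (x k) (x' k) :=
  sum_eq_single k (fun j _ hj => by rw [h j hj, dist_self, mul_zero]) (by simp)

end WeightedDist

/-- With `d_L(x, x') = ∑ j, L j * d j (x j) (x' j)`, each `L k > 0`,
`G : X → ℝ` `d_L`-short, `O ⊆ X` and `k ∈ {1, …, K}`, the quantity
`D̂_k[X, G|_O, d_L]` (the supremum, in `[0, ∞]`, of `|y − y'|` over all `(x, y), (x', y')`
with `x` and `x'` differing only in coordinate `k`, `|y − y'| ≤ L k * d k (x k) (x' k)`, and
`|y − G z| ≤ d_L(x, z)`, `|y' − G z| ≤ d_L(x', z)` for all `z ∈ O`) equals the supremum,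
in `[0, ∞]`, of the McDiarmid subdiameters `D_k[g]` over all `d_L`-short functions
`g : X → ℝ` with `g = G` on `O`. -/
theorem Dhat_eq_sup_subdiameter_over_extensions
    {K : ℕ} {X : Fin K → Type*} [∀ k, MetricSpace (X k)]
    (L : Fin K → ℝ) (hL : ∀ k, 0 < L k)
    (G : (∀ j, X j) → ℝ)
    (hG : ∀ x x' : ∀ j, X j, |G x - G x'| ≤ ∑ j, L j * dist (x j) (x' j))
    (O : Set (∀ j, X j)) (k : Fin K) :
    (⨆ (x : ∀ j, X j) (x' : ∀ j, X j) (y : ℝ) (y' : ℝ)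
        (_ : (∀ j, j ≠ k → x j = x' j) ∧
             |y - y'| ≤ L k * dist (x k) (x' k) ∧
             (∀ z ∈ O, |y - G z| ≤ ∑ j, L j * dist (x j) (z j)) ∧
             (∀ z ∈ O, |y' - G z| ≤ ∑ j, L j * dist (x' j) (z j))),
        ENNReal.ofReal |y - y'|) =
      (⨆ (g : (∀ j, X j) → ℝ)
          (_ : (∀ x x' : ∀ j, X j, |g x - g x'| ≤ ∑ j, L j * dist (x j) (x' j)) ∧
               (∀ z ∈ O, g z = G z)),
        ⨆ (x : ∀ j, X j) (x' : ∀ j, X j) (_ : ∀ j, j ≠ k → x j = x' j),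
          ENNReal.ofReal |g x - g x'|) := by
  have hL' : ∀ k, 0 ≤ L k := fun k => (hL k).le
  apply le_antisymm
  · refine iSup_le fun x => iSup_le fun x' => iSup_le fun y => iSup_le fun y' => iSup_le ?_
    rintro ⟨hxx', hyy', hy, hy'⟩
    rw [← weighted_dist_eq_of_eq_off L hxx'] at hyy'
    obtain ⟨g, g_short, g_eq⟩ := exists_short_extension_of_pairwise (weighted_dist_self L)
      (weighted_dist_comm L) (weighted_dist_triangle L hL') (Set.insert_nonempty _ _)
      (pairwise_short_insert_insert_graph (weighted_dist_comm L) (fun z _ z' _ => hG z z')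
        hyy' hy hy')
    have hgx : g x = y := g_eq (x, y) (by simp)
    have hgx' : g x' = y' := g_eq (x', y') (by simp)
    refine le_iSup₂_of_le g ⟨g_short, fun z hz => g_eq (z, G z) (by simp [hz])⟩
      (le_iSup₂_of_le x x' (le_iSup_of_le hxx' ?_))
    rw [hgx, hgx']
  · refine iSup₂_le fun g hg => iSup₂_le fun x x' => iSup_le fun hxx' => ?_
    refine le_iSup₂_of_le x x' (le_iSup₂_of_le (g x) (g x') (le_iSup_of_le ?_ le_rfl))
    exact ⟨hxx', weighted_dist_eq_of_eq_off L hxx' ▸ hg.1 x x',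
      fun z hz => hg.2 z hz ▸ hg.1 x z, fun z hz => hg.2 z hz ▸ hg.1 x' z⟩
end

section
/- Assume each L_k > 0, let G : X → ℝ be d_L-short, let O ⊆ X be nonempty, and suppose the gap size Γ(X, O, d_L) is finite. Then for every k ∈ {1,…,K}, D_k[G] ≤ D̂_k[X, G|_O, d_L] ≤ D_k[G] + 4 Γ(X, O, d_L). -/
open scoped ENNReal

/-!
The lower bound holds because every pair `x, x'` differing only in coordinate `k` yields the
admissible choice `y = G x`, `y' = G x'`. For the upper bound, anchor an admissible `(x, y)` at
`z ∈ O` and `(x', y')` at `z' ∈ O`, and let `w` be `z` with its `k`-th coordinate replaced by that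
of `z'`. Then `G z - G w` is bounded by `D_k[G]`, while, since `x` and `x'` agree off `k`, the
triangle inequality gives `d_L(w, z') ≤ d_L(x, z) + d_L(x', z')`. Chaining
`y, G z, G w, G z', y'` yields `|y - y'| ≤ D_k[G] + 2 (d_L(x, z) + d_L(x', z'))`, and taking the
infimum over `z` and `z'` bounds the last term by `4 Γ`.
-/

open Function

theorem ENNReal.le_add_mul_iInf_add_iInf {ι ι' : Sort*} {a b c : ℝ≥0∞}
    {f : ι → ℝ≥0∞} {g : ι' → ℝ≥0∞} (hc₀ : c ≠ 0) (hc : c ≠ ∞)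
    (h : ∀ i j, a ≤ b + c * (f i + g j)) :
    a ≤ b + c * ((⨅ i, f i) + ⨅ j, g j) := by
  simp_rw [ENNReal.iInf_add, ENNReal.add_iInf, ENNReal.mul_iInf_of_ne hc₀ hc, ENNReal.add_iInf]
  exact le_iInf₂ h

section WeightedDist

variable {ι : Type*} [Fintype ι] {X : ι → Type*} [∀ i, PseudoMetricSpace (X i)]
  {L : ι → ℝ}

/-- The weighted ℓ¹ distance `d_L` on the product `∀ i, X i`. -/
def weightedDist (L : ι → ℝ) (x x' : ∀ i, X i) : ℝ :=
  ∑ i, L i * dist (x i) (x' i)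

theorem weightedDist_nonneg (hL : ∀ i, 0 ≤ L i) (x x' : ∀ i, X i) :
    0 ≤ weightedDist L x x' :=
  Finset.sum_nonneg fun i _ => mul_nonneg (hL i) dist_nonneg

theorem weightedDist_eq_of_forall_ne {k : ι} {x x' : ∀ i, X i}
    (hxx' : ∀ j, j ≠ k → x j = x' j) :
    weightedDist L x x' = L k * dist (x k) (x' k) :=
  Finset.sum_eq_single k (fun j _ hj => by rw [hxx' j hj, dist_self, mul_zero])
    (fun hk => absurd (Finset.mem_univ k) hk)

variable [DecidableEq ι]

theorem weightedDist_update_le (hL : ∀ i, 0 ≤ L i) {k : ι} {x x' : ∀ i, X i}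
    (hxx' : ∀ j, j ≠ k → x j = x' j) (z z' : ∀ i, X i) :
    weightedDist L (update z k (z' k)) z' ≤ weightedDist L x z + weightedDist L x' z' := by
  rw [weightedDist, weightedDist, weightedDist, ← Finset.sum_add_distrib]
  refine Finset.sum_le_sum fun j _ => ?_
  rcases eq_or_ne j k with rfl | hj
  · rw [update_self, dist_self, mul_zero]
    exact add_nonneg (mul_nonneg (hL j) dist_nonneg) (mul_nonneg (hL j) dist_nonneg)
  · calc L j * dist (update z k (z' k) j) (z' j)
        = L j * dist (z j) (z' j) := by rw [update_of_ne hj]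
      _ ≤ L j * (dist (x j) (z j) + dist (x' j) (z' j)) := by
          gcongr (L j * ?_)
          · exact hL j
          · rw [← hxx' j hj]; exact dist_triangle_left _ _ _
      _ = L j * dist (x j) (z j) + L j * dist (x' j) (z' j) := mul_add _ _ _

variable {G : (∀ i, X i) → ℝ}

theorem abs_sub_le_of_anchored (hL : ∀ i, 0 ≤ L i)
    (hG : ∀ x x', |G x - G x'| ≤ weightedDist L x x') {k : ι} {x x' : ∀ i, X i}
    (hxx' : ∀ j, j ≠ k → x j = x' j) {y y' : ℝ} {z z' : ∀ i, X i}
    (hy : |y - G z| ≤ weightedDist L x z) (hy' : |y' - G z'| ≤ weightedDist L x' z') :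
    |y - y'| ≤ |G z - G (update z k (z' k))| + 2 * (weightedDist L x z + weightedDist L x' z') := by
  set w := update z k (z' k)
  have hw : |G w - G z'| ≤ weightedDist L x z + weightedDist L x' z' :=
    (hG w z').trans (weightedDist_update_le hL hxx' z z')
  calc |y - y'| = |(y - G z) + (G z - G w) + (G w - G z') - (y' - G z')| := by ring_nf
    _ ≤ |y - G z| + |G z - G w| + |G w - G z'| + |y' - G z'| := by
        refine (abs_sub _ _).trans (add_le_add_left ?_ _)
        exact (abs_add_le _ _).trans (add_le_add_left (abs_add_le _ _) _)
    _ ≤ _ := by linarith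

theorem ofReal_abs_sub_le_of_anchored (hL : ∀ i, 0 ≤ L i)
    (hG : ∀ x x', |G x - G x'| ≤ weightedDist L x x') {k : ι} {x x' : ∀ i, X i}
    (hxx' : ∀ j, j ≠ k → x j = x' j) {y y' : ℝ} {z z' : ∀ i, X i}
    (hy : |y - G z| ≤ weightedDist L x z) (hy' : |y' - G z'| ≤ weightedDist L x' z') :
    ENNReal.ofReal |y - y'| ≤ ENNReal.ofReal |G z - G (update z k (z' k))| +
      2 * (ENNReal.ofReal (weightedDist L x z) + ENNReal.ofReal (weightedDist L x' z')) := by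
  have hS := weightedDist_nonneg hL x z
  have hS' := weightedDist_nonneg hL x' z'
  calc ENNReal.ofReal |y - y'|
      ≤ ENNReal.ofReal (|G z - G (update z k (z' k))| +
          2 * (weightedDist L x z + weightedDist L x' z')) :=
        ENNReal.ofReal_le_ofReal (abs_sub_le_of_anchored hL hG hxx' hy hy')
    _ = _ := by
        rw [ENNReal.ofReal_add (abs_nonneg _) (by positivity), ENNReal.ofReal_mul zero_le_two,
          ENNReal.ofReal_add hS hS', ENNReal.ofReal_ofNat]

end WeightedDist

theorem Dhat_error_bound_general
    {K : ℕ} {X : Fin K → Type*} [∀ k, MetricSpace (X k)]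
    (L : Fin K → ℝ) (hL : ∀ k, 0 < L k)
    (G : (∀ j, X j) → ℝ)
    (hG : ∀ x x' : ∀ j, X j, |G x - G x'| ≤ ∑ j, L j * dist (x j) (x' j))
    (O : Set (∀ j, X j))
    (Γ : ℝ≥0∞)
    (hΓdef : Γ = ⨆ x : ∀ j, X j, ⨅ z : O,
        ENNReal.ofReal (∑ j, L j * dist (x j) ((z : ∀ j, X j) j)))
    (k : Fin K)
    (Dk : ℝ≥0∞)
    (hDkdef : Dk = ⨆ (x : ∀ j, X j) (x' : ∀ j, X j) (_ : ∀ j, j ≠ k → x j = x' j),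
        ENNReal.ofReal |G x - G x'|)
    (Dhat : ℝ≥0∞)
    (hDhatdef : Dhat = ⨆ (x : ∀ j, X j) (x' : ∀ j, X j) (y : ℝ) (y' : ℝ)
        (_ : (∀ j, j ≠ k → x j = x' j) ∧
             |y - y'| ≤ L k * dist (x k) (x' k) ∧
             (∀ z ∈ O, |y - G z| ≤ ∑ j, L j * dist (x j) (z j)) ∧
             (∀ z ∈ O, |y' - G z| ≤ ∑ j, L j * dist (x' j) (z j))),
        ENNReal.ofReal |y - y'|) :
    Dk ≤ Dhat ∧ Dhat ≤ Dk + 4 * Γ := by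
  have hL₀ : ∀ j, 0 ≤ L j := fun j => (hL j).le
  constructor
  · rw [hDkdef, hDhatdef]
    refine iSup₂_le fun x x' => iSup_le fun hxx' => ?_
    have hshort : |G x - G x'| ≤ L k * dist (x k) (x' k) :=
      weightedDist_eq_of_forall_ne (L := L) hxx' ▸ hG x x'
    exact le_iSup₂_of_le x x' <| le_iSup₂_of_le (G x) (G x') <|
      le_iSup_of_le ⟨hxx', hshort, fun z _ => hG x z, fun z _ => hG x' z⟩ le_rfl
  · rw [hDhatdef]
    refine iSup₂_le fun x x' => iSup₂_le fun y y' => iSup_le fun ⟨hxx', _, hy, hy'⟩ => ?_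
    have hanchored : ∀ z z' : O, ENNReal.ofReal |y - y'| ≤ Dk + 2 *
        (ENNReal.ofReal (weightedDist L x z) + ENNReal.ofReal (weightedDist L x' z')) := by
      rintro ⟨z, hz⟩ ⟨z', hz'⟩
      refine (ofReal_abs_sub_le_of_anchored hL₀ hG hxx' (hy z hz) (hy' z' hz')).trans ?_
      gcongr
      exact hDkdef ▸ le_iSup₂_of_le z (update z k (z' k)) <|
        le_iSup_of_le (fun j hj => (update_of_ne hj _ _).symm) le_rfl
    have hgap : ∀ x₀ : ∀ j, X j, ⨅ z : O, ENNReal.ofReal (weightedDist L x₀ z) ≤ Γ :=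
      fun x₀ => hΓdef ▸ le_iSup_of_le x₀ le_rfl
    calc ENNReal.ofReal |y - y'|
        ≤ Dk + 2 * ((⨅ z : O, ENNReal.ofReal (weightedDist L x z)) +
            ⨅ z' : O, ENNReal.ofReal (weightedDist L x' z')) :=
          ENNReal.le_add_mul_iInf_add_iInf two_ne_zero ENNReal.ofNat_ne_top hanchored
      _ ≤ Dk + 2 * (Γ + Γ) := by gcongr <;> exact hgap _
      _ = Dk + 4 * Γ := by ring

/-- Error bound for `D̂_k`: with each `L k > 0`, `G : X → ℝ` `d_L`-short,
`O ⊆ X` nonempty, and finite gap size `Γ(X, O, d_L) = sup_{x ∈ X} inf_{z ∈ O} d_L(x, z)`,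
for every `k` one has `D_k[G] ≤ D̂_k[X, G|_O, d_L] ≤ D_k[G] + 4 Γ(X, O, d_L)`, where all
quantities are taken in the extended nonnegative reals `[0, ∞]`. -/
theorem Dhat_error_bound
    {K : ℕ} {X : Fin K → Type*} [∀ k, MetricSpace (X k)]
    (L : Fin K → ℝ) (hL : ∀ k, 0 < L k)
    (G : (∀ j, X j) → ℝ)
    (hG : ∀ x x' : ∀ j, X j, |G x - G x'| ≤ ∑ j, L j * dist (x j) (x' j))
    (O : Set (∀ j, X j)) (hO : O.Nonempty)
    (Γ : ℝ≥0∞)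
    (hΓdef : Γ = ⨆ x : ∀ j, X j, ⨅ z : O,
        ENNReal.ofReal (∑ j, L j * dist (x j) ((z : ∀ j, X j) j)))
    (hΓfin : Γ ≠ ∞)
    (k : Fin K)
    (Dk : ℝ≥0∞)
    (hDkdef : Dk = ⨆ (x : ∀ j, X j) (x' : ∀ j, X j) (_ : ∀ j, j ≠ k → x j = x' j),
        ENNReal.ofReal |G x - G x'|)
    (Dhat : ℝ≥0∞)
    (hDhatdef : Dhat = ⨆ (x : ∀ j, X j) (x' : ∀ j, X j) (y : ℝ) (y' : ℝ)
        (_ : (∀ j, j ≠ k → x j = x' j) ∧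
             |y - y'| ≤ L k * dist (x k) (x' k) ∧
             (∀ z ∈ O, |y - G z| ≤ ∑ j, L j * dist (x j) (z j)) ∧
             (∀ z ∈ O, |y' - G z| ≤ ∑ j, L j * dist (x' j) (z j))),
        ENNReal.ofReal |y - y'|) :
    Dk ≤ Dhat ∧ Dhat ≤ Dk + 4 * Γ :=
  Dhat_error_bound_general L hL G hG O Γ hΓdef k Dk hDkdef Dhat hDhatdef
end

section
/- Let R > 0 and m ∈ ℝ, and write t₊ := max(t, 0) for t ∈ ℝ. Then the supremum of μ((−∞, 0]) over all Borel probability measures μ on ℝ such that the support of μ is contained in some closed interval of length at most R and ∫_ℝ y dμ(y) ≥ m, equals (1 − m₊/R)₊. -/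
open MeasureTheory Set
open scoped ENNReal

/-!
A measure supported in an interval `[a, b]` of length at most `R` with mass at `(-∞, 0]` has
`b ≤ R` (otherwise that mass is zero), so `y ≤ R · 1_{y > 0}` almost everywhere and the mean is at
most `R · μ((0, ∞)) = R · (1 - μ((-∞, 0]))`. The two-point measure putting mass `m₊/R` at `R` and
the rest at `0` attains the bound.
-/

section UpperBound

variable {μ : Measure ℝ}

theorem integral_id_le_mul_measureReal_Ioi [IsFiniteMeasure μ] {c : ℝ} (hc : 0 ≤ c)
    (h : ∀ᵐ y ∂μ, y ≤ c) : ∫ y, y ∂μ ≤ c * μ.real (Ioi 0) := by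
  by_cases hint : Integrable (fun y : ℝ => y) μ
  · calc ∫ y, y ∂μ ≤ ∫ y, (Ioi (0 : ℝ)).indicator (fun _ => c) y ∂μ := by
          refine integral_mono_ae hint ((integrable_const c).indicator measurableSet_Ioi) ?_
          filter_upwards [h] with y hy
          by_cases hy0 : 0 < y
          · simpa [hy0] using hy
          · simpa [hy0] using le_of_not_gt hy0
      _ = c * μ.real (Ioi 0) := by
          rw [integral_indicator_const _ measurableSet_Ioi, smul_eq_mul, mul_comm]
  · rw [integral_undef hint]
    positivity

theorem measureReal_Iic_zero_le_one_sub_integral_div [IsProbabilityMeasure μ] {c : ℝ}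
    (hc : 0 < c) (h : ∀ᵐ y ∂μ, y ≤ c) : μ.real (Iic 0) ≤ 1 - (∫ y, y ∂μ) / c := by
  have hmean := integral_id_le_mul_measureReal_Ioi hc.le h
  rw [← compl_Iic, probReal_compl_eq_one_sub measurableSet_Iic] at hmean
  rw [le_sub_comm, div_le_iff₀ hc]
  linarith

theorem measure_Iic_zero_le_of_compl_Icc_eq_zero [IsProbabilityMeasure μ] {R m a b : ℝ}
    (hR : 0 < R) (hab : b - a ≤ R) (hsupp : μ (Icc a b)ᶜ = 0) (hm : m ≤ ∫ y, y ∂μ) :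
    μ (Iic 0) ≤ ENNReal.ofReal (1 - max m 0 / R) := by
  rcases le_or_gt m 0 with hm0 | hm0
  · simpa [max_eq_right hm0] using prob_le_one
  rcases lt_or_ge 0 a with ha | ha
  · have : Iic (0 : ℝ) ⊆ (Icc a b)ᶜ := fun y hy hyab => (hyab.1.trans hy).not_gt ha
    simp [measure_mono_null this hsupp]
  have hle : ∀ᵐ y ∂μ, y ≤ R := by
    filter_upwards [mem_ae_iff.2 hsupp] with y hy
    linarith [hy.2]
  rw [← ofReal_measureReal, max_eq_left hm0.le]
  refine ENNReal.ofReal_le_ofReal ((measureReal_Iic_zero_le_one_sub_integral_div hR hle).trans ?_)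
  gcongr

end UpperBound

noncomputable def twoPointMeasure (p x y : ℝ) : Measure ℝ :=
  ENNReal.ofReal (1 - p) • Measure.dirac x + ENNReal.ofReal p • Measure.dirac y

section TwoPoint

variable {p : ℝ} (x y : ℝ)

theorem twoPointMeasure_apply {s : Set ℝ} (hs : MeasurableSet s) :
    twoPointMeasure p x y s =
      ENNReal.ofReal (1 - p) * s.indicator 1 x + ENNReal.ofReal p * s.indicator 1 y := by
  simp [twoPointMeasure, Measure.dirac_apply' _ hs]

theorem isProbabilityMeasure_twoPointMeasure (hp0 : 0 ≤ p) (hp1 : p ≤ 1) :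
    IsProbabilityMeasure (twoPointMeasure p x y) := by
  constructor
  rw [twoPointMeasure_apply x y MeasurableSet.univ]
  simp [← ENNReal.ofReal_add (sub_nonneg.2 hp1) hp0]

theorem integral_id_twoPointMeasure (hp0 : 0 ≤ p) (hp1 : p ≤ 1) :
    ∫ z, z ∂twoPointMeasure p x y = (1 - p) * x + p * y := by
  have hint (z : ℝ) : Integrable (fun w : ℝ => w) (Measure.dirac z) := integrable_dirac (by simp)
  rw [twoPointMeasure, integral_add_measure ((hint x).smul_measure ENNReal.ofReal_ne_top)
    ((hint y).smul_measure ENNReal.ofReal_ne_top), integral_smul_measure, integral_smul_measure,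
    integral_dirac, integral_dirac, ENNReal.toReal_ofReal (sub_nonneg.2 hp1),
    ENNReal.toReal_ofReal hp0, smul_eq_mul, smul_eq_mul]

end TwoPoint

/-- For `R > 0` and `m ∈ ℝ`, the supremum of `μ((−∞, 0])` over all Borel
probability measures `μ` on `ℝ` whose support is contained in some closed interval of
length at most `R` and whose mean satisfies `∫ y dμ(y) ≥ m` equals `(1 − m₊/R)₊`,
where `t₊ = max t 0`. -/
theorem sup_prob_nonpos_bounded_support_mean
    (R : ℝ) (hR : 0 < R) (m : ℝ) :
    (⨆ μ : {μ : Measure ℝ // IsProbabilityMeasure μ ∧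
        (∃ a b : ℝ, b - a ≤ R ∧ μ (Set.Icc a b)ᶜ = 0) ∧
        m ≤ ∫ y, y ∂μ},
      (μ : Measure ℝ) (Set.Iic (0 : ℝ))) =
    ENNReal.ofReal (max (1 - max m 0 / R) 0) := by
  rw [ENNReal.ofReal_max, ENNReal.ofReal_zero, max_eq_left zero_le]
  apply le_antisymm
  · exact iSup_le fun ⟨μ, _, ⟨a, b, hab, hsupp⟩, hm⟩ =>
      measure_Iic_zero_le_of_compl_Icc_eq_zero hR hab hsupp hm
  rcases le_or_gt R (max m 0) with hRm | hmR
  · rw [ENNReal.ofReal_of_nonpos (by rwa [sub_nonpos, one_le_div hR])]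
    exact zero_le
  set p := max m 0 / R
  have hp0 : 0 ≤ p := by positivity
  have hp1 : p ≤ 1 := (div_le_one hR).2 hmR.le
  have hmean : ∫ z, z ∂twoPointMeasure p 0 R = max m 0 := by
    rw [integral_id_twoPointMeasure 0 R hp0 hp1, mul_zero, zero_add, div_mul_cancel₀ _ hR.ne']
  refine le_iSup_of_le ⟨twoPointMeasure p 0 R, isProbabilityMeasure_twoPointMeasure 0 R hp0 hp1,
    ⟨0, R, by simp, ?_⟩, hmean ▸ le_max_left m 0⟩ ?_
  · simp [twoPointMeasure_apply 0 R measurableSet_Icc.compl, hR.le]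
  · simp [twoPointMeasure_apply 0 R measurableSet_Iic, hR]
end

section
/- Let L > 0, z ∈ [0, 1/2], γ > 0, and m ∈ ℝ with m ≤ γ + L(1 − z), and write t₊ := max(t, 0). Let P̂ denote the supremum of μ({x ∈ [0,1] : g(x) ≤ 0}) over all pairs (g, μ) where g : [0,1] → ℝ is Lipschitz with constant L and g(z) = γ, μ is a Borel probability measure on [0,1], and ∫ g dμ ≥ m. Then: (i) if γ ≤ L z, then P̂ = (1 − m₊/(L − (L z − γ)))₊; and (ii) if γ > L(1 − z), then P̂ = 0. -/
/-!
Every admissible `g` satisfies `g ≤ D := γ + L (1 - z) = L - (L z - γ)` on `[0,1]`, because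
`|x - z| ≤ 1 - z` there when `z ≤ 1/2`. Hence `m ≤ ∫ g dμ ≤ D (1 - μ(g ≤ 0))`, i.e.
`μ(g ≤ 0) ≤ 1 - m₊ / D`. When `γ ≤ L z` the steepest line `g₀ x = γ + L (x - z)` vanishes at
`a = z - γ / L ∈ [0,1]` and equals `D` at `1`, so `p δ_a + (1 - p) δ_1` with `p = 1 - m₊ / D`
attains the bound. When `γ > L (1 - z)`, every admissible `g` is positive on `[0,1]`.
-/

open MeasureTheory
open scoped ENNReal

/-- The least upper bound `P̂` on the failure probability `μ(g ≤ 0)` over all pairs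
`(g, μ)` where `g : [0,1] → ℝ` is Lipschitz with constant `L` with the single observed
value `g z = γ`, and `μ` is a Borel probability measure on `[0,1]` with `∫ g dμ ≥ m`.
(Functions and measures on `[0,1]` are represented by functions on `ℝ` Lipschitz on
`[0,1]` and measures on `ℝ` supported on `[0,1]`.) -/
noncomputable def PhatOneObs (L z γ m : ℝ) : ℝ≥0∞ :=
  ⨆ p : {p : (ℝ → ℝ) × Measure ℝ //
      IsProbabilityMeasure p.2 ∧ p.2 (Set.Icc (0 : ℝ) 1)ᶜ = 0 ∧
      (∀ x ∈ Set.Icc (0 : ℝ) 1, ∀ x' ∈ Set.Icc (0 : ℝ) 1,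
        |p.1 x - p.1 x'| ≤ L * |x - x'|) ∧
      p.1 z = γ ∧ m ≤ ∫ x, p.1 x ∂p.2},
    p.val.2 {x ∈ Set.Icc (0 : ℝ) 1 | p.val.1 x ≤ 0}

open Set

structure OneObsFeasible (L z γ m : ℝ) (g : ℝ → ℝ) (μ : Measure ℝ) : Prop where
  isProbabilityMeasure : IsProbabilityMeasure μ
  measure_compl_Icc : μ (Icc (0 : ℝ) 1)ᶜ = 0
  abs_sub_le_mul : ∀ x ∈ Icc (0 : ℝ) 1, ∀ x' ∈ Icc (0 : ℝ) 1, |g x - g x'| ≤ L * |x - x'|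
  apply_obs : g z = γ
  le_integral : m ≤ ∫ x, g x ∂μ

section PhatOneObs

variable {L z γ m : ℝ} {g : ℝ → ℝ} {μ : Measure ℝ}

theorem le_phatOneObs (h : OneObsFeasible L z γ m g μ) :
    μ {x ∈ Icc (0 : ℝ) 1 | g x ≤ 0} ≤ PhatOneObs L z γ m :=
  le_iSup_of_le ⟨(g, μ), h.1, h.2, h.3, h.4, h.5⟩ le_rfl

theorem phatOneObs_le {c : ℝ≥0∞}
    (h : ∀ g μ, OneObsFeasible L z γ m g μ → μ {x ∈ Icc (0 : ℝ) 1 | g x ≤ 0} ≤ c) :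
    PhatOneObs L z γ m ≤ c :=
  iSup_le fun ⟨(g, μ), h₁, h₂, h₃, h₄, h₅⟩ => h g μ ⟨h₁, h₂, h₃, h₄, h₅⟩

end PhatOneObs

theorem abs_sub_le_one_sub_of_le_half {x z : ℝ} (hx : x ∈ Icc (0 : ℝ) 1) (hz : z ≤ 1 / 2) :
    |x - z| ≤ 1 - z :=
  abs_le.mpr ⟨by linarith [hx.1], by linarith [hx.2]⟩

theorem integral_le_mul_measureReal_compl {α : Type*} [MeasurableSpace α] {μ : Measure α}
    [IsFiniteMeasure μ] {g : α → ℝ} {A : Set α} {D : ℝ} (hg : Integrable g μ)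
    (hA : MeasurableSet A) (hgA : ∀ x ∈ A, g x ≤ 0) (hgD : ∀ᵐ x ∂μ, g x ≤ D) :
    ∫ x, g x ∂μ ≤ D * μ.real Aᶜ := by
  have hle : ∀ᵐ x ∂μ, g x ≤ Aᶜ.indicator (fun _ => D) x := hgD.mono fun x hx => by
    by_cases hxA : x ∈ A
    · simpa [hxA] using hgA x hxA
    · simpa [hxA] using hx
  calc ∫ x, g x ∂μ ≤ ∫ x, Aᶜ.indicator (fun _ => D) x ∂μ :=
        integral_mono_ae hg ((integrable_const D).indicator hA.compl) hle
    _ = D * μ.real Aᶜ := by rw [integral_indicator_const D hA.compl, smul_eq_mul, mul_comm]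

theorem measureReal_le_one_sub_div {α : Type*} [MeasurableSpace α] {μ : Measure α}
    [IsProbabilityMeasure μ] {g : α → ℝ} {A : Set α} {D m : ℝ} (hg : Integrable g μ)
    (hA : MeasurableSet A) (hgA : ∀ x ∈ A, g x ≤ 0) (hgD : ∀ᵐ x ∂μ, g x ≤ D) (hD : 0 < D)
    (hm : m ≤ ∫ x, g x ∂μ) :
    μ.real A ≤ 1 - max m 0 / D := by
  have hint : m ≤ D * (1 - μ.real A) := by
    rw [← probReal_compl_eq_one_sub hA]
    exact hm.trans (integral_le_mul_measureReal_compl hg hA hgA hgD)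
  have hpos : 0 ≤ D * (1 - μ.real A) := mul_nonneg hD.le (by simp [measureReal_le_one])
  rw [le_sub_comm, div_le_iff₀ hD, mul_comm]
  exact max_le hint hpos

section DiracMix

variable {α : Type*} [MeasurableSpace α] {p : ℝ} {a b : α}

noncomputable def diracMix (p : ℝ) (a b : α) : Measure α :=
  ENNReal.ofReal p • Measure.dirac a + ENNReal.ofReal (1 - p) • Measure.dirac b

theorem isProbabilityMeasure_diracMix (hp : p ∈ Icc (0 : ℝ) 1) :
    IsProbabilityMeasure (diracMix p a b) := by
  constructor
  simp [diracMix, ← ENNReal.ofReal_add hp.1 (sub_nonneg.mpr hp.2)]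

theorem diracMix_apply [MeasurableSingletonClass α] (s : Set α) :
    diracMix p a b s =
      ENNReal.ofReal p * s.indicator 1 a + ENNReal.ofReal (1 - p) * s.indicator 1 b := by
  simp [diracMix, Measure.dirac_apply]

theorem integral_diracMix [MeasurableSingletonClass α] (hp : p ∈ Icc (0 : ℝ) 1) (f : α → ℝ) :
    ∫ x, f x ∂diracMix p a b = p * f a + (1 - p) * f b := by
  rw [diracMix, integral_add_measure, integral_smul_measure, integral_smul_measure,
    integral_dirac, integral_dirac, ENNReal.toReal_ofReal hp.1,
    ENNReal.toReal_ofReal (sub_nonneg.mpr hp.2), smul_eq_mul, smul_eq_mul]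
  all_goals exact (integrable_dirac enorm_lt_top).smul_measure ENNReal.ofReal_ne_top

end DiracMix

namespace OneObsFeasible

variable {L z γ m : ℝ} {g : ℝ → ℝ} {μ : Measure ℝ}

theorem abs_sub_le (h : OneObsFeasible L z γ m g μ) (hL : 0 ≤ L) (hz : z ∈ Icc (0 : ℝ) (1 / 2))
    {x : ℝ} (hx : x ∈ Icc (0 : ℝ) 1) : |g x - γ| ≤ L * (1 - z) := by
  have hz1 : z ∈ Icc (0 : ℝ) 1 := ⟨hz.1, by linarith [hz.2]⟩
  calc |g x - γ| = |g x - g z| := by rw [h.apply_obs]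
    _ ≤ L * |x - z| := h.abs_sub_le_mul x hx z hz1
    _ ≤ L * (1 - z) := mul_le_mul_of_nonneg_left (abs_sub_le_one_sub_of_le_half hx hz.2) hL

theorem continuousOn (h : OneObsFeasible L z γ m g μ) (hL : 0 ≤ L) :
    ContinuousOn g (Icc 0 1) :=
  (LipschitzOnWith.of_dist_le_mul (K := L.toNNReal) fun x hx y hy => by
    simpa [Real.dist_eq, hL] using h.abs_sub_le_mul x hx y hy).continuousOn

theorem ae_mem_Icc (h : OneObsFeasible L z γ m g μ) : ∀ᵐ x ∂μ, x ∈ Icc (0 : ℝ) 1 :=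
  mem_ae_iff.mpr h.measure_compl_Icc

theorem integrable (h : OneObsFeasible L z γ m g μ) (hL : 0 ≤ L) : Integrable g μ := by
  have := h.isProbabilityMeasure
  rw [← Measure.restrict_eq_self_of_ae_mem h.ae_mem_Icc]
  exact (h.continuousOn hL).integrableOn_compact isCompact_Icc

theorem measure_failure_le (h : OneObsFeasible L z γ m g μ) (hL : 0 ≤ L)
    (hz : z ∈ Icc (0 : ℝ) (1 / 2)) (hD : 0 < γ + L * (1 - z)) :
    μ {x ∈ Icc (0 : ℝ) 1 | g x ≤ 0} ≤
      ENNReal.ofReal (max (1 - max m 0 / (γ + L * (1 - z))) 0) := by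
  have := h.isProbabilityMeasure
  have hA : MeasurableSet {x ∈ Icc (0 : ℝ) 1 | g x ≤ 0} :=
    ((h.continuousOn hL).preimage_isClosed_of_isClosed isClosed_Icc isClosed_Iic).measurableSet
  have hgD : ∀ᵐ x ∂μ, g x ≤ γ + L * (1 - z) := h.ae_mem_Icc.mono fun x hx => by
    linarith [(abs_le.mp (h.abs_sub_le hL hz hx)).2]
  rw [← ofReal_measureReal]
  exact ENNReal.ofReal_le_ofReal <| le_max_of_le_left <|
    measureReal_le_one_sub_div (h.integrable hL) hA (fun x hx => hx.2) hgD hD h.le_integral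

theorem failure_eq_empty (h : OneObsFeasible L z γ m g μ) (hL : 0 ≤ L)
    (hz : z ∈ Icc (0 : ℝ) (1 / 2)) (hγ : L * (1 - z) < γ) :
    {x ∈ Icc (0 : ℝ) 1 | g x ≤ 0} = ∅ :=
  eq_empty_of_forall_notMem fun x hx => by
    linarith [hx.2, (abs_le.mp (h.abs_sub_le hL hz hx.1)).1]

end OneObsFeasible

theorem ofReal_le_phatOneObs {L z γ m : ℝ} (hL : 0 < L) (hz : z ≤ 1) (hγ : 0 < γ)
    (hγz : γ ≤ L * z) (hp : 0 ≤ 1 - max m 0 / (γ + L * (1 - z))) :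
    ENNReal.ofReal (1 - max m 0 / (γ + L * (1 - z))) ≤ PhatOneObs L z γ m := by
  set D := γ + L * (1 - z) with hD_def
  set p := 1 - max m 0 / D with hp_def
  set a := z - γ / L with ha_def
  set g₀ : ℝ → ℝ := fun x => γ + L * (x - z) with hg₀_def
  have hD : 0 < D := by nlinarith
  have ha : a ∈ Icc (0 : ℝ) 1 := by
    have : γ / L ≤ z := by rwa [div_le_iff₀ hL, mul_comm]
    exact ⟨by linarith, by linarith [div_pos hγ hL]⟩
  have hp1 : p ∈ Icc (0 : ℝ) 1 := ⟨hp, by have := div_nonneg (le_max_right m 0) hD.le; linarith⟩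
  have hg₀a : g₀ a = 0 := by simp only [hg₀_def, ha_def]; field_simp; ring
  have hg₀1 : g₀ 1 = D := by simp only [hg₀_def, hD_def]
  have h1 : (1 : ℝ) ∈ Icc (0 : ℝ) 1 := right_mem_Icc.mpr zero_le_one
  have hfeas : OneObsFeasible L z γ m g₀ (diracMix p a 1) :=
    { isProbabilityMeasure := isProbabilityMeasure_diracMix hp1
      measure_compl_Icc := by simp [diracMix_apply, ha, h1]
      abs_sub_le_mul := fun x _ x' _ => by
        rw [show g₀ x - g₀ x' = L * (x - x') by ring, abs_mul, abs_of_pos hL]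
      apply_obs := by simp [hg₀_def]
      le_integral := by
        have hmass : (1 - p) * D = max m 0 := by rw [hp_def]; field_simp; ring
        rw [integral_diracMix hp1, hg₀a, hg₀1, mul_zero, zero_add, hmass]
        exact le_max_left m 0 }
  have haS : a ∈ {x ∈ Icc (0 : ℝ) 1 | g₀ x ≤ 0} := ⟨ha, hg₀a.le⟩
  have h1S : 1 ∉ {x ∈ Icc (0 : ℝ) 1 | g₀ x ≤ 0} := fun h1S => hD.not_ge (hg₀1 ▸ h1S.2)
  calc ENNReal.ofReal p = diracMix p a 1 {x ∈ Icc (0 : ℝ) 1 | g₀ x ≤ 0} := by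
        rw [diracMix_apply, indicator_of_mem haS, indicator_of_notMem h1S, Pi.one_apply, mul_one,
          mul_zero, add_zero]
    _ ≤ PhatOneObs L z γ m := le_phatOneObs hfeas

theorem Phat_one_obs_cases_low_and_impossible_general
    (L z γ m : ℝ) (hL : 0 < L) (hz : z ∈ Set.Icc (0 : ℝ) (1 / 2))
    (hγ : 0 < γ) :
    (γ ≤ L * z →
      PhatOneObs L z γ m = ENNReal.ofReal (max (1 - max m 0 / (L - (L * z - γ))) 0)) ∧
    (L * (1 - z) < γ → PhatOneObs L z γ m = 0) := by
  have hD : 0 < γ + L * (1 - z) := by nlinarith [hz.2]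
  refine ⟨fun hγz => ?_, fun hγ_gt => ?_⟩
  · rw [show L - (L * z - γ) = γ + L * (1 - z) by ring]
    refine le_antisymm (phatOneObs_le fun g μ h => h.measure_failure_le hL.le hz hD) ?_
    rcases le_total 0 (1 - max m 0 / (γ + L * (1 - z))) with hp | hp
    · rw [max_eq_left hp]
      exact ofReal_le_phatOneObs hL (by linarith [hz.2]) hγ hγz hp
    · simp [max_eq_right hp]
  · refine nonpos_iff_eq_zero.mp (phatOneObs_le fun g μ h => ?_)
    rw [h.failure_eq_empty hL.le hz hγ_gt, measure_empty]

/-- Cases (i) and (v) of the one-data-point example: for `L > 0`,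
`z ∈ [0, 1/2]`, `γ > 0`, `m ≤ γ + L(1 − z)`:
(i) if `γ ≤ L z` then `P̂ = (1 − m₊/(L − (L z − γ)))₊`;
(ii) if `γ > L(1 − z)` then `P̂ = 0`. -/
theorem Phat_one_obs_cases_low_and_impossible
    (L z γ m : ℝ) (hL : 0 < L) (hz : z ∈ Set.Icc (0 : ℝ) (1 / 2))
    (hγ : 0 < γ) (hm : m ≤ γ + L * (1 - z)) :
    (γ ≤ L * z →
      PhatOneObs L z γ m = ENNReal.ofReal (max (1 - max m 0 / (L - (L * z - γ))) 0)) ∧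
    (L * (1 - z) < γ → PhatOneObs L z γ m = 0) :=
  Phat_one_obs_cases_low_and_impossible_general L z γ m hL hz hγ
end

section
/- Let L > 0, z ∈ [0, 1/2], γ > 0, and m ∈ ℝ with m ≤ γ + L(1 − z), and write t₊ := max(t, 0). Let P̂ denote the supremum of μ({x ∈ [0,1] : g(x) ≤ 0}) over all pairs (g, μ) where g : [0,1] → ℝ is Lipschitz with constant L and g(z) = γ, μ is a Borel probability measure on [0,1], and ∫ g dμ ≥ m. Then: (i) if z ≤ 1/4 and L(1/2 − z) < γ ≤ L(1 − 3z), then P̂ = (1 − 2 m₊/(L + (γ − L z)))₊; and (ii) if L·max{z, 1 − 3z} < γ ≤ L(1 − z), then P̂ = (1 − m₊/(L z + γ))₊. -/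
open MeasureTheory
open scoped ENNReal

/-!
A zero `x₀ ∈ [0,1]` of an admissible `g` satisfies `γ ≤ L |x₀ - z|`, and since `L z < γ` this
forces `x₀ ≥ z + γ / L`. The Lipschitz bounds from `z` and from `x₀` then give `g ≤ γ + L z` left
of `z`, `2 g ≤ γ + L (x₀ - z) ≤ γ + L (1 - z)` between `z` and `x₀`, and
`g ≤ L (1 - x₀) ≤ L (1 - z) - γ` right of `x₀`; in both regimes all three are at most
`M = max (γ + L z) ((L + (γ - L z)) / 2)`. Bounding `g` by `M` off `{g ≤ 0}` and by `0` on it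
gives `m ≤ M (1 - μ {g ≤ 0})`. The bound is attained by the tent
`min (γ + L |x - z|) (L (1 - x))`, which vanishes at `1` and takes the value `M` at some `c`,
together with the measure `p δ₁ + (1 - p) δ_c`, `p = 1 - m₊ / M`.
-/

open Set

lemma PhatOneObs_le {L z γ m : ℝ} {B : ℝ≥0∞}
    (h : ∀ (g : ℝ → ℝ) (μ : Measure ℝ), IsProbabilityMeasure μ → μ (Icc 0 1)ᶜ = 0 →
      (∀ x ∈ Icc (0 : ℝ) 1, ∀ x' ∈ Icc (0 : ℝ) 1, |g x - g x'| ≤ L * |x - x'|) →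
      g z = γ → m ≤ ∫ x, g x ∂μ → μ {x ∈ Icc (0 : ℝ) 1 | g x ≤ 0} ≤ B) :
    PhatOneObs L z γ m ≤ B :=
  iSup_le fun ⟨⟨g, μ⟩, hμ, hsupp, hlip, hgz, hm⟩ => h g μ hμ hsupp hlip hgz hm

lemma le_PhatOneObs {L z γ m : ℝ} (g : ℝ → ℝ) (μ : Measure ℝ) [hμ : IsProbabilityMeasure μ]
    (hsupp : μ (Icc 0 1)ᶜ = 0)
    (hlip : ∀ x ∈ Icc (0 : ℝ) 1, ∀ x' ∈ Icc (0 : ℝ) 1, |g x - g x'| ≤ L * |x - x'|)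
    (hgz : g z = γ) (hm : m ≤ ∫ x, g x ∂μ) :
    μ {x ∈ Icc (0 : ℝ) 1 | g x ≤ 0} ≤ PhatOneObs L z γ m :=
  le_iSup (fun p : {p : (ℝ → ℝ) × Measure ℝ //
      IsProbabilityMeasure p.2 ∧ p.2 (Icc (0 : ℝ) 1)ᶜ = 0 ∧
      (∀ x ∈ Icc (0 : ℝ) 1, ∀ x' ∈ Icc (0 : ℝ) 1, |p.1 x - p.1 x'| ≤ L * |x - x'|) ∧
      p.1 z = γ ∧ m ≤ ∫ x, p.1 x ∂p.2} => p.val.2 {x ∈ Icc (0 : ℝ) 1 | p.val.1 x ≤ 0})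
    ⟨(g, μ), hμ, hsupp, hlip, hgz, hm⟩

lemma lipschitzOnWith_of_abs_sub_le {L : ℝ} (hL : 0 ≤ L) {g : ℝ → ℝ} {s : Set ℝ}
    (h : ∀ x ∈ s, ∀ x' ∈ s, |g x - g x'| ≤ L * |x - x'|) :
    LipschitzOnWith L.toNNReal g s :=
  .of_dist_le_mul fun x hx x' hx' => by
    simpa [Real.dist_eq, Real.coe_toNNReal L hL] using h x hx x' hx'

lemma measureReal_le_one_sub_div_s7 {α : Type*} [MeasurableSpace α] {μ : Measure α}
    [IsProbabilityMeasure μ] {f : α → ℝ} {S : Set α} {m M : ℝ} (hM : 0 < M)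
    (hS : MeasurableSet S) (hf : Integrable f μ) (hfS : ∀ x ∈ S, f x ≤ 0)
    (hfM : ∀ᵐ x ∂μ, f x ≤ M) (hm : m ≤ ∫ x, f x ∂μ) :
    μ.real S ≤ 1 - m / M := by
  have hf_le : ∫ x, f x ∂μ ≤ (1 - μ.real S) * M := calc
    ∫ x, f x ∂μ ≤ ∫ x, Sᶜ.indicator (fun _ => M) x ∂μ := by
      refine integral_mono_ae hf ((integrable_const M).indicator hS.compl) ?_
      filter_upwards [hfM] with x hx
      by_cases hxS : x ∈ S
      · simpa [hxS] using hfS x hxS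
      · simpa [hxS] using hx
    _ = (1 - μ.real S) * M := by
      rw [integral_indicator_const _ hS.compl, probReal_compl_eq_one_sub hS, smul_eq_mul]
  have := (div_le_iff₀ hM).2 (hm.trans hf_le)
  linarith

lemma le_of_abs_sub_le_of_nonpos {g : ℝ → ℝ} {L z γ M : ℝ} (hL : 0 ≤ L)
    (hlip : ∀ x ∈ Icc (0 : ℝ) 1, ∀ x' ∈ Icc (0 : ℝ) 1, |g x - g x'| ≤ L * |x - x'|)
    (hz : z ∈ Icc (0 : ℝ) 1) (hgz : g z = γ) (hLz : L * z < γ)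
    (hM₁ : γ + L * z ≤ M) (hM₂ : γ + L * (1 - z) ≤ 2 * M) (hM₃ : L * (1 - z) ≤ γ + M)
    {x₀ : ℝ} (hx₀ : x₀ ∈ Icc (0 : ℝ) 1) (hgx₀ : g x₀ ≤ 0) {x : ℝ} (hx : x ∈ Icc (0 : ℝ) 1) :
    g x ≤ M := by
  have hzx₀ : γ ≤ L * (x₀ - z) := by
    have h := (abs_le.mp (hlip z hz x₀ hx₀)).2
    rcases le_total z x₀ with hle | hle
    · rw [abs_of_nonpos (by linarith)] at h; linarith
    · rw [abs_of_nonneg (by linarith)] at h; nlinarith [hx₀.1]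
  have hgx_z : g x ≤ γ + L * |x - z| := by linarith [(abs_le.mp (hlip x hx z hz)).2]
  have hgx_x₀ : g x ≤ L * |x - x₀| := by linarith [(abs_le.mp (hlip x hx x₀ hx₀)).2]
  rcases le_total x z with hxz | hzx
  · rw [abs_of_nonpos (by linarith)] at hgx_z
    nlinarith [hx.1]
  rcases le_total x x₀ with hxx₀ | hx₀x
  · rw [abs_of_nonneg (by linarith)] at hgx_z
    rw [abs_of_nonpos (by linarith)] at hgx_x₀
    nlinarith [hx₀.2]
  · rw [abs_of_nonneg (by linarith)] at hgx_x₀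
    nlinarith [hx.2]

lemma PhatOneObs_le_ofReal {L z γ m M : ℝ} (hL : 0 ≤ L) (hz : z ∈ Icc (0 : ℝ) 1)
    (hLz : L * z < γ) (hM₁ : γ + L * z ≤ M) (hM₂ : γ + L * (1 - z) ≤ 2 * M)
    (hM₃ : L * (1 - z) ≤ γ + M) :
    PhatOneObs L z γ m ≤ ENNReal.ofReal (max (1 - max m 0 / M) 0) := by
  have hM : 0 < M := by nlinarith [hz.1]
  refine PhatOneObs_le fun g μ _ hsupp hlip hgz hm => ?_
  set S := {x ∈ Icc (0 : ℝ) 1 | g x ≤ 0}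
  rcases S.eq_empty_or_nonempty with hS | ⟨x₀, hx₀, hgx₀⟩
  · simp [hS]
  rcases le_or_gt m 0 with hm₀ | hm₀
  · simpa [max_eq_right hm₀] using prob_le_one
  have hg : ContinuousOn g (Icc 0 1) := (lipschitzOnWith_of_abs_sub_le hL hlip).continuousOn
  have hae : ∀ᵐ x ∂μ, x ∈ Icc (0 : ℝ) 1 := mem_ae_iff.mpr hsupp
  have hS : MeasurableSet S :=
    (hg.preimage_isClosed_of_isClosed isClosed_Icc isClosed_Iic).measurableSet
  have hgi : Integrable g μ := by
    rw [← Measure.restrict_eq_self_of_ae_mem hae]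
    exact hg.integrableOn_Icc
  have hgM : ∀ᵐ x ∂μ, g x ≤ M := hae.mono fun x hx =>
    le_of_abs_sub_le_of_nonpos hL hlip hz hgz hLz hM₁ hM₂ hM₃ hx₀ hgx₀ hx
  rw [max_eq_left hm₀.le, ← ofReal_measureReal]
  exact ENNReal.ofReal_le_ofReal <| le_max_of_le_left <|
    measureReal_le_one_sub_div_s7 hM hS hgi (fun x hx => hx.2) hgM hm

lemma ofReal_le_PhatOneObs {L z γ m M : ℝ} {g : ℝ → ℝ}
    (hlip : ∀ x ∈ Icc (0 : ℝ) 1, ∀ x' ∈ Icc (0 : ℝ) 1, |g x - g x'| ≤ L * |x - x'|)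
    (hgz : g z = γ) {a c : ℝ} (ha : a ∈ Icc (0 : ℝ) 1) (hc : c ∈ Icc (0 : ℝ) 1)
    (hga : g a = 0) (hgc : g c = M) (hM : 0 < M) :
    ENNReal.ofReal (max (1 - max m 0 / M) 0) ≤ PhatOneObs L z γ m := by
  set p := 1 - max m 0 / M
  rcases le_or_gt p 0 with hp | hp
  · simp [max_eq_right hp]
  have hp₁ : 0 ≤ 1 - p := by simp only [p, sub_sub_cancel]; positivity
  set μ : Measure ℝ :=
    ENNReal.ofReal p • Measure.dirac a + ENNReal.ofReal (1 - p) • Measure.dirac c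
  have : IsProbabilityMeasure μ := ⟨by simp [μ, ← ENNReal.ofReal_add hp.le hp₁]⟩
  have hsupp : μ (Icc 0 1)ᶜ = 0 := by simp [μ, ha, hc]
  have hint : ∫ x, g x ∂μ = max m 0 := by
    have hi : ∀ b, Integrable g (Measure.dirac b) := fun b => integrable_dirac enorm_lt_top
    rw [integral_add_measure ((hi a).smul_measure ENNReal.ofReal_ne_top)
      ((hi c).smul_measure ENNReal.ofReal_ne_top)]
    simp only [integral_smul_measure, integral_dirac, hga, hgc,
      ENNReal.toReal_ofReal hp.le, ENNReal.toReal_ofReal hp₁, p]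
    rw [sub_sub_cancel, smul_zero, zero_add, smul_eq_mul, div_mul_cancel₀ _ hM.ne']
  have hμS : ENNReal.ofReal p ≤ μ {x ∈ Icc (0 : ℝ) 1 | g x ≤ 0} := by
    rw [Measure.add_apply]
    have haS : a ∈ {x ∈ Icc (0 : ℝ) 1 | g x ≤ 0} := ⟨ha, hga.le⟩
    exact le_add_right (by
      rw [Measure.smul_apply, Measure.dirac_apply_of_mem haS, smul_eq_mul, mul_one])
  rw [max_eq_left hp.le]
  exact hμS.trans (le_PhatOneObs g μ hsupp hlip hgz (hint ▸ le_max_left m 0))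

def extremalResponse (L z γ x : ℝ) : ℝ := min (γ + L * |x - z|) (L * (1 - x))

section extremalResponse

variable {L z γ : ℝ}

lemma abs_extremalResponse_sub_le (hL : 0 ≤ L) (x x' : ℝ) :
    |extremalResponse L z γ x - extremalResponse L z γ x'| ≤ L * |x - x'| := by
  refine (abs_min_sub_min_le_max _ _ _ _).trans (max_le ?_ ?_)
  · rw [add_sub_add_left_eq_sub, ← mul_sub, abs_mul, abs_of_nonneg hL]
    exact mul_le_mul_of_nonneg_left
      (by simpa using abs_abs_sub_abs_le_abs_sub (x - z) (x' - z)) hL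
  · rw [← mul_sub, abs_mul, abs_of_nonneg hL, sub_sub_sub_cancel_left, abs_sub_comm]

lemma extremalResponse_self (h : γ ≤ L * (1 - z)) : extremalResponse L z γ z = γ := by
  simpa [extremalResponse] using h

lemma extremalResponse_one (hL : 0 ≤ L) (hγ : 0 ≤ γ) : extremalResponse L z γ 1 = 0 := by
  simp only [extremalResponse, sub_self, mul_zero]
  exact min_eq_right (by positivity)

lemma extremalResponse_zero (hz : 0 ≤ z) (h : γ ≤ L * (1 - z)) :
    extremalResponse L z γ 0 = L * z + γ := by
  rw [extremalResponse, zero_sub, abs_neg, abs_of_nonneg hz, min_eq_left (by linarith)]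
  ring

lemma exists_extremalResponse_eq_half (hL : 0 < L) (hz : 0 ≤ z) (hγ : 0 ≤ γ)
    (h : γ ≤ L * (1 - z)) :
    ∃ c ∈ Icc (0 : ℝ) 1, extremalResponse L z γ c = (L + (γ - L * z)) / 2 := by
  have hγL : γ / L ≤ 1 - z := (div_le_iff₀' hL).2 h
  have hγL₀ : 0 ≤ γ / L := by positivity
  refine ⟨(1 + z - γ / L) / 2, ⟨by linarith, by linarith⟩, ?_⟩
  have hcz : 0 ≤ (1 + z - γ / L) / 2 - z := by linarith
  have hleft : γ + L * ((1 + z - γ / L) / 2 - z) = (L + (γ - L * z)) / 2 := by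
    field_simp
    ring
  have hright : L * (1 - (1 + z - γ / L) / 2) = (L + (γ - L * z)) / 2 := by
    field_simp
    ring
  rw [extremalResponse, abs_of_nonneg hcz, hleft, hright, min_self]

end extremalResponse

theorem Phat_one_obs_cases_middle_general
    (L z γ m : ℝ) (hL : 0 < L) (hz : z ∈ Set.Icc (0 : ℝ) (1 / 2)) :
    (z ≤ 1 / 4 → L * (1 / 2 - z) < γ → γ ≤ L * (1 - 3 * z) →
      PhatOneObs L z γ m = ENNReal.ofReal (max (1 - 2 * max m 0 / (L + (γ - L * z))) 0)) ∧
    (L * max z (1 - 3 * z) < γ → γ ≤ L * (1 - z) →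
      PhatOneObs L z γ m = ENNReal.ofReal (max (1 - max m 0 / (L * z + γ)) 0)) := by
  obtain ⟨hz₀, hz₁⟩ := hz
  have hzI : z ∈ Icc (0 : ℝ) 1 := ⟨hz₀, by linarith⟩
  have hlip x (_ : x ∈ Icc (0 : ℝ) 1) x' (_ : x' ∈ Icc (0 : ℝ) 1) :=
    abs_extremalResponse_sub_le (z := z) (γ := γ) hL.le x x'
  refine ⟨fun hz14 h₁ h₂ => ?_, fun h₁ h₂ => ?_⟩
  · have hLz : L * z < γ := by nlinarith
    have hγ₁ : γ ≤ L * (1 - z) := by nlinarith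
    obtain ⟨c, hc, hgc⟩ := exists_extremalResponse_eq_half hL hz₀ (by linarith) hγ₁
    rw [show 2 * max m 0 / (L + (γ - L * z)) = max m 0 / ((L + (γ - L * z)) / 2) by
      rw [div_div_eq_mul_div, mul_comm]]
    refine le_antisymm (PhatOneObs_le_ofReal hL.le hzI hLz (by linarith) (by linarith)
      (by linarith)) ?_
    exact ofReal_le_PhatOneObs hlip (extremalResponse_self hγ₁) ⟨zero_le_one, le_rfl⟩ hc
      (extremalResponse_one hL.le (by linarith)) hgc (by linarith)
  · have hLz : L * z < γ := lt_of_le_of_lt (by gcongr; exact le_max_left _ _) h₁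
    have h₃ : L * (1 - 3 * z) < γ := lt_of_le_of_lt (by gcongr; exact le_max_right _ _) h₁
    refine le_antisymm (PhatOneObs_le_ofReal hL.le hzI hLz (by linarith) (by linarith)
      (by linarith)) ?_
    exact ofReal_le_PhatOneObs hlip (extremalResponse_self h₂) ⟨zero_le_one, le_rfl⟩
      ⟨le_rfl, zero_le_one⟩ (extremalResponse_one hL.le (by linarith))
      (extremalResponse_zero hz₀ h₂) (by linarith)

/-- Middle cases of the one-data-point example: for `L > 0`,
`z ∈ [0, 1/2]`, `γ > 0`, `m ≤ γ + L(1 − z)`: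
(i) if `z ≤ 1/4` and `L(1/2 − z) < γ ≤ L(1 − 3z)` then
    `P̂ = (1 − 2 m₊/(L + (γ − L z)))₊`;
(ii) if `L·max{z, 1 − 3z} < γ ≤ L(1 − z)` then `P̂ = (1 − m₊/(L z + γ))₊`. -/
theorem Phat_one_obs_cases_middle
    (L z γ m : ℝ) (hL : 0 < L) (hz : z ∈ Set.Icc (0 : ℝ) (1 / 2))
    (hγ : 0 < γ) (hm : m ≤ γ + L * (1 - z)) :
    (z ≤ 1 / 4 → L * (1 / 2 - z) < γ → γ ≤ L * (1 - 3 * z) →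
      PhatOneObs L z γ m = ENNReal.ofReal (max (1 - 2 * max m 0 / (L + (γ - L * z))) 0)) ∧
    (L * max z (1 - 3 * z) < γ → γ ≤ L * (1 - z) →
      PhatOneObs L z γ m = ENNReal.ofReal (max (1 - max m 0 / (L * z + γ)) 0)) :=
  Phat_one_obs_cases_middle_general L z γ m hL hz
end

section
/- Let O ⊆ X be nonempty and let G : O → ℝ satisfy |G(z) − G(z')| ≤ d_L(z, z') for all z, z' ∈ O. Define the set-valued map G̃ : X → (subsets of ℝ) by G̃(x) := { g(x) : g ∈ E(X, G|_O, d_L) }. Then G̃ is a set-valued Lipschitz function with constant 1 with respect to d_L: for all x, x' ∈ X and every y ∈ G̃(x), inf_{y' ∈ G̃(x')} |y − y'| ≤ d_L(x, x'); equivalently, the Hausdorff distance between G̃(x) and G̃(x') is at most d_L(x, x'). -/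
open Metric

section EvalSet

variable {α : Type*} {F : Set (α → ℝ)} {D : α → α → ℝ}

def evalSet (F : Set (α → ℝ)) (x : α) : Set ℝ := (fun g => g x) '' F

theorem exists_mem_evalSet_abs_sub_le (hF : ∀ g ∈ F, ∀ w w', |g w - g w'| ≤ D w w')
    {x x' : α} {y : ℝ} (hy : y ∈ evalSet F x) :
    ∃ y' ∈ evalSet F x', |y - y'| ≤ D x x' := by
  obtain ⟨g, hg, rfl⟩ := hy
  exact ⟨g x', ⟨g, hg, rfl⟩, hF g hg x x'⟩

theorem sInf_abs_sub_evalSet_le (hF : ∀ g ∈ F, ∀ w w', |g w - g w'| ≤ D w w')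
    {x x' : α} {y : ℝ} (hy : y ∈ evalSet F x) :
    sInf {d : ℝ | ∃ y' ∈ evalSet F x', d = |y - y'|} ≤ D x x' := by
  obtain ⟨y', hy', hyy'⟩ := exists_mem_evalSet_abs_sub_le hF hy
  have hbdd : BddBelow {d : ℝ | ∃ y' ∈ evalSet F x', d = |y - y'|} := by
    refine ⟨0, ?_⟩
    rintro d ⟨_, _, rfl⟩
    exact abs_nonneg _
  exact (csInf_le hbdd ⟨y', hy', rfl⟩).trans hyy'

theorem hausdorffDist_evalSet_le (hF : ∀ g ∈ F, ∀ w w', |g w - g w'| ≤ D w w')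
    {x x' : α} (hD : 0 ≤ D x x') :
    hausdorffDist (evalSet F x) (evalSet F x') ≤ D x x' := by
  refine hausdorffDist_le_of_mem_dist hD (fun y hy => ?_) (fun y' hy' => ?_)
  · simpa only [Real.dist_eq] using exists_mem_evalSet_abs_sub_le hF hy
  · obtain ⟨g, hg, rfl⟩ := hy'
    exact ⟨g x, ⟨g, hg, rfl⟩, by simpa only [Real.dist_eq, abs_sub_comm] using hF g hg x x'⟩

end EvalSet

theorem feasible_set_valued_lipschitz_general
    {K : ℕ} {X : Fin K → Type*} [∀ k, MetricSpace (X k)]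
    (L : Fin K → ℝ) (hL : ∀ k, 0 ≤ L k)
    (O : Set (∀ k, X k)) (G : (∀ k, X k) → ℝ)
    (Gt : (∀ k, X k) → Set ℝ)
    (hGt : Gt = fun x => {y : ℝ | ∃ g : (∀ k, X k) → ℝ,
      (∀ w w' : ∀ k, X k, |g w - g w'| ≤ ∑ k, L k * dist (w k) (w' k)) ∧
      (∀ z ∈ O, g z = G z) ∧ y = g x}) :
    ∀ x x' : ∀ k, X k,
      (∀ y ∈ Gt x,
        sInf {d : ℝ | ∃ y' ∈ Gt x', d = |y - y'|} ≤ ∑ k, L k * dist (x k) (x' k)) ∧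
      Metric.hausdorffDist (Gt x) (Gt x') ≤ ∑ k, L k * dist (x k) (x' k) := by
  set dL : (∀ k, X k) → (∀ k, X k) → ℝ := fun w w' => ∑ k, L k * dist (w k) (w' k)
  set E : Set ((∀ k, X k) → ℝ) := {g | (∀ w w', |g w - g w'| ≤ dL w w') ∧ ∀ z ∈ O, g z = G z}
  have hGt_eq : Gt = evalSet E := by
    subst hGt
    ext x y
    constructor
    · rintro ⟨g, hshort, hO, rfl⟩
      exact ⟨g, ⟨hshort, hO⟩, rfl⟩
    · rintro ⟨g, ⟨hshort, hO⟩, rfl⟩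
      exact ⟨g, hshort, hO, rfl⟩
  have hE : ∀ g ∈ E, ∀ w w', |g w - g w'| ≤ dL w w' := fun g hg => hg.1
  intro x x'
  rw [hGt_eq]
  exact ⟨fun y hy => sInf_abs_sub_evalSet_le hE hy,
    hausdorffDist_evalSet_le hE (Finset.sum_nonneg fun k _ => mul_nonneg (hL k) dist_nonneg)⟩

/-- The set-valued map of feasible values is set-valued Lipschitz with
constant `1` for `d_L`.  Let `O ⊆ X` be nonempty and let `G : O → ℝ` satisfy
`|G z − G z'| ≤ d_L(z, z')` on `O`.  Define `G̃ x := { g x : g ∈ E(X, G|_O, d_L) }`.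
Then for all `x, x' ∈ X` and every `y ∈ G̃ x`,
`inf_{y' ∈ G̃ x'} |y − y'| ≤ d_L(x, x')`; equivalently, the Hausdorff distance between
`G̃ x` and `G̃ x'` is at most `d_L(x, x')`. -/
theorem feasible_set_valued_lipschitz
    {K : ℕ} {X : Fin K → Type*} [∀ k, MetricSpace (X k)]
    (L : Fin K → ℝ) (hL : ∀ k, 0 ≤ L k)
    (O : Set (∀ k, X k)) (hO : O.Nonempty) (G : (∀ k, X k) → ℝ)
    (hG : ∀ z ∈ O, ∀ z' ∈ O, |G z - G z'| ≤ ∑ k, L k * dist (z k) (z' k))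
    (Gt : (∀ k, X k) → Set ℝ)
    (hGt : Gt = fun x => {y : ℝ | ∃ g : (∀ k, X k) → ℝ,
      (∀ w w' : ∀ k, X k, |g w - g w'| ≤ ∑ k, L k * dist (w k) (w' k)) ∧
      (∀ z ∈ O, g z = G z) ∧ y = g x}) :
    ∀ x x' : ∀ k, X k,
      (∀ y ∈ Gt x,
        sInf {d : ℝ | ∃ y' ∈ Gt x', d = |y - y'|} ≤ ∑ k, L k * dist (x k) (x' k)) ∧
      Metric.hausdorffDist (Gt x) (Gt x') ≤ ∑ k, L k * dist (x k) (x' k) :=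
  feasible_set_valued_lipschitz_general L hL O G Gt hGt
end
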